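/- Assume the trust-region parameter block. Let ε > 0, Δ > 0 with ζ·Δ ≤ ε, and let h, H ∈ ℝⁿ satisfy ‖h‖ > ε and ‖h − H‖ ≤ κ_grad·Δ. Then ‖H‖ > (ζ − κ_grad)·Δ. Consequently, if in addition ared, pred, cred are real numbers with pred ≥ κ_fcd·‖H‖·min{‖H‖/κ_bmh, Δ}, |cred − ared| ≤ η·pred, and |ared − pred| ≤ 2·κ_val·Δ², then cred ≥ η₁·pred and ‖H‖ ≥ η₂·Δ, i.e., the trust-region step is accepted. -/
import Mathlib
set_option maxHeartbeats 1000000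


theorem stmt_17 {n : ℕ} (L κbmh κgrad κfcd η₂ η₁ η ζ : ℝ)
    (hL : 0 < L) (hκbmh : 1 ≤ κbmh) (hκgrad : 0 < κgrad) (hκfcd : 0 < κfcd)
    (hη₂ : 0 < η₂) (hη₁ : η₁ ∈ Set.Ioo (0 : ℝ) 1)
    (hη : η ∈ Set.Ioo 0 (min η₁ (1 - η₁)))
    (hζ : ζ ≥ κgrad + max η₂
      (4 * ((L + κbmh + 2 * κgrad) / 4) / ((1 - η₁ - η) * min κfcd 1)))
    (ε Δ : ℝ) (hε : 0 < ε) (hΔ : 0 < Δ) (hζΔ : ζ * Δ ≤ ε)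
    (h H : EuclideanSpace ℝ (Fin n))
    (hh : ‖h‖ > ε) (hhH : ‖h - H‖ ≤ κgrad * Δ) :
    ‖H‖ > (ζ - κgrad) * Δ ∧
      ∀ ared pred cred : ℝ,
        pred ≥ κfcd * ‖H‖ * min (‖H‖ / κbmh) Δ →
        |cred - ared| ≤ η * pred →
        |ared - pred| ≤ 2 * ((L + κbmh + 2 * κgrad) / 4) * Δ ^ 2 →
        cred ≥ η₁ * pred ∧ ‖H‖ ≥ η₂ * Δ := by
  obtain ⟨hη₁0, hη₁1⟩ := hη₁
  obtain ⟨hη0, hη1⟩ := hη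
  have hηlt : η < 1 - η₁ := lt_of_lt_of_le hη1 (min_le_right _ _)
  set K : ℝ := (L + κbmh + 2 * κgrad) / 4 with hK
  have hK0 : 0 < K := by positivity
  set c : ℝ := 1 - η₁ - η with hc
  have hc0 : 0 < c := by simp [hc]; linarith
  have hc1 : c < 1 := by simp [hc]; linarith
  set m : ℝ := min κfcd 1 with hm
  have hm0 : 0 < m := lt_min hκfcd one_pos
  have hm1 : m ≤ 1 := min_le_right _ _
  set M : ℝ := max η₂ (4 * K / (c * m)) with hM
  -- ‖H‖ bound
  have hnorm : ‖h‖ - ‖H‖ ≤ ‖h - H‖ := norm_sub_norm_le h H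
  have hHgt : ‖H‖ > (ζ - κgrad) * Δ := by nlinarith [norm_nonneg (h - H)]
  have hζM : ζ - κgrad ≥ M := by linarith
  have hHM : ‖H‖ > M * Δ := lt_of_le_of_lt (by nlinarith [le_max_left η₂ (4 * K / (c * m))]) hHgt
  -- M ≥ 4K/(cm)
  have hMb : M ≥ 4 * K / (c * m) := le_max_right _ _
  have hcm1 : c * m ≤ 1 := by nlinarith
  have hcm0 : 0 < c * m := mul_pos hc0 hm0
  have h4K : 4 * K / (c * m) ≥ 4 * K := by
    rw [ge_iff_le, le_div_iff₀ hcm0]; nlinarith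
  have h4Kb : 4 * K ≥ κbmh := by rw [hK]; linarith
  have hHbmh : ‖H‖ > κbmh * Δ := by
    refine lt_of_le_of_lt ?_ hHM
    exact mul_le_mul_of_nonneg_right (le_trans (le_trans h4Kb h4K) hMb) hΔ.le
  have hHη₂ : ‖H‖ ≥ η₂ * Δ :=
    le_trans (mul_le_mul_of_nonneg_right (le_max_left _ _) hΔ.le) hHM.le
  refine ⟨hHgt, fun ared pred cred hpred hcred hared => ?_⟩
  refine ⟨?_, hHη₂⟩
  have hminΔ : min (‖H‖ / κbmh) Δ = Δ := by
    apply min_eq_right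
    rw [le_div_iff₀ (by linarith : (0:ℝ) < κbmh), mul_comm]
    exact hHbmh.le
  rw [hminΔ] at hpred
  -- pred ≥ κfcd ‖H‖ Δ ≥ m * (4K/(cm)) Δ * Δ = 4KΔ²/c
  have hmκ : m ≤ κfcd := min_le_left _ _
  have hpred2 : c * pred ≥ 4 * K * Δ ^ 2 := by
    have hHb : ‖H‖ ≥ 4 * K / (c * m) * Δ :=
      le_trans (mul_le_mul_of_nonneg_right hMb hΔ.le) hHM.le
    have h2 : pred ≥ m * (4 * K / (c * m) * Δ) * Δ := by
      refine le_trans ?_ hpred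
      have hx : 0 ≤ 4 * K / (c * m) * Δ := by positivity
      have := mul_le_mul hmκ hHb hx hκfcd.le
      nlinarith
    have h3 : m * (4 * K / (c * m)) = 4 * K / c := by
      field_simp
    calc c * pred ≥ c * (m * (4 * K / (c * m) * Δ) * Δ) :=
      mul_le_mul_of_nonneg_left h2 hc0.le
      _ = c * (4 * K / c) * Δ ^ 2 := by rw [← mul_assoc m, h3]; ring
      _ = 4 * K * Δ ^ 2 := by field_simp
  obtain ⟨hc1', hc2'⟩ := abs_le.mp hcred
  obtain ⟨ha1, ha2⟩ := abs_le.mp hared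
  nlinarith [sq_nonneg Δ]
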